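/- arXiv:1009.1655 — 5 statements merged into one kernel-verified Lean document; each statement's English description precedes it below -/
import Mathlib

section
/- The number of partitions of the set {1,...,n} into blocks equals the number of pairs of integer sequences (a_1,...,a_k) and (b_1,...,b_k) (for some k with 0 ≤ k ≤ n-1) such that: the a_i are strictly increasing, the b_i are pairwise distinct, a_i < b_i for all i, and all entries lie in {1,...,n}. (Endpoint notation bijection for set partitions.) -/
open Finset Nat

/-!
Record a set partition of a finite linear order by its arc diagram: each element is sent to the
next larger element of its block, if any. This partial map is strictly increasing and injective,
and conversely every such map comes from exactly one partition, whose blocks are its chains (the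
equivalence classes of reachability in either direction; left- and right-uniqueness of the step
relation make this transitive). An arc diagram with `k` arcs is in turn the same as its list of
left endpoints `a₁ < ⋯ < aₖ` together with the distinct right endpoints `bᵢ > aᵢ`, and `k < n`
because the largest element starts no arc.
-/

namespace Relation.ReflTransGen

theorem total_of_left_unique {α : Type*} {r : α → α → Prop} {a b c : α}
    (U : Relator.LeftUnique r) (ac : ReflTransGen r a c) (bc : ReflTransGen r b c) :
    ReflTransGen r a b ∨ ReflTransGen r b a := by
  have := total_of_right_unique (r := Function.swap r) (fun _ _ _ h₁ h₂ => U h₁ h₂)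
    (reflTransGen_swap.2 ac) (reflTransGen_swap.2 bc)
  simpa only [reflTransGen_swap, or_comm] using this

end Relation.ReflTransGen

namespace Finpartition

variable {α : Type*} [DecidableEq α]

theorem parts_eq_image_part {s : Finset α} (P : Finpartition s) : P.parts = s.image P.part := by
  ext t
  simp only [mem_image]
  constructor
  · intro ht
    obtain ⟨a, ha, rfl⟩ := P.part_surjOn ht
    exact ⟨a, ha, rfl⟩
  · rintro ⟨a, ha, rfl⟩
    exact P.part_mem.2 ha

variable [Fintype α]

theorem ofSetoid_ker_part (P : Finpartition (univ : Finset α))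
    [DecidableRel (Setoid.ker P.part)] : ofSetoid (Setoid.ker P.part) = P := by
  have hpart : (ofSetoid (Setoid.ker P.part)).part = P.part := by
    ext a b
    rw [mem_part_ofSetoid_iff_rel, Setoid.ker_def, P.mem_part_iff_part_eq_part (mem_univ b)
      (mem_univ a), eq_comm]
  ext1
  rw [parts_eq_image_part, parts_eq_image_part, hpart]

theorem ker_part_ofSetoid (s : Setoid α) [DecidableRel s] : Setoid.ker (ofSetoid s).part = s := by
  ext a b
  rw [Setoid.ker_def, ← (ofSetoid s).mem_part_iff_part_eq_part (mem_univ a) (mem_univ b),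
    mem_part_ofSetoid_iff_rel, s.comm']

open Classical in
noncomputable def equivSetoid : Finpartition (univ : Finset α) ≃ Setoid α where
  toFun P := Setoid.ker P.part
  invFun s := ofSetoid s
  left_inv P := ofSetoid_ker_part P
  right_inv s := ker_part_ofSetoid s

end Finpartition

@[ext]
structure ArcDiagram (α : Type*) [LT α] where
  next : α → Option α
  lt_of_next_eq_some {i j : α} : next i = some j → i < j
  eq_of_next_eq_some {i₁ i₂ j : α} : next i₁ = some j → next i₂ = some j → i₁ = i₂

namespace ArcDiagram

open Relation

variable {α : Type*} [LinearOrder α] (D : ArcDiagram α)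

def Step (i j : α) : Prop := D.next i = some j

theorem step_rightUnique : Relator.RightUnique D.Step :=
  fun _ _ _ h₁ h₂ => Option.some_injective _ (h₁.symm.trans h₂)

theorem step_leftUnique : Relator.LeftUnique D.Step :=
  fun _ _ _ h₁ h₂ => D.eq_of_next_eq_some h₁ h₂

theorem le_of_reflTransGen {i j : α} (h : ReflTransGen D.Step i j) : i ≤ j := by
  induction h with
  | refl => exact le_rfl
  | tail _ hstep ih => exact ih.trans (D.lt_of_next_eq_some hstep).le

def toSetoid : Setoid α where
  r a b := ReflTransGen D.Step a b ∨ ReflTransGen D.Step b a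
  iseqv := by
    refine ⟨fun _ => .inl .refl, Or.symm, ?_⟩
    rintro a b c (hab | hba) (hbc | hcb)
    · exact .inl (hab.trans hbc)
    · exact hab.total_of_left_unique D.step_leftUnique hcb
    · exact hba.total_of_right_unique D.step_rightUnique hbc
    · exact .inr (hcb.trans hba)

theorem exists_next_of_toSetoid_of_lt {i m : α} (h : D.toSetoid i m) (him : i < m) :
    ∃ c, D.next i = some c ∧ ReflTransGen D.Step c m := by
  rcases h with h | h
  · rcases h.cases_head with rfl | hc
    · exact absurd him (lt_irrefl i)
    · exact hc
  · exact absurd (D.le_of_reflTransGen h) him.not_ge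

end ArcDiagram

namespace Setoid

variable {α : Type*} [LinearOrder α] [Fintype α] (s : Setoid α)

open Classical in
noncomputable def nextAbove (i : α) : Option α :=
  if h : {j | i < j ∧ s i j}.toFinset.Nonempty then some (min' _ h) else none

variable {s}

theorem nextAbove_eq_some_iff {i j : α} :
    s.nextAbove i = some j ↔ IsLeast {m | i < m ∧ s i m} j := by
  classical
  unfold nextAbove
  split_ifs with h
  · have hleast := isLeast_min' _ h
    rw [Set.coe_toFinset] at hleast
    exact Option.some_inj.trans ⟨fun hj => hj ▸ hleast, hleast.unique⟩
  · exact iff_of_false nofun fun hj => h ⟨j, Set.mem_toFinset.2 hj.1⟩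

theorem nextAbove_eq_none_iff {i : α} :
    s.nextAbove i = none ↔ ∀ m, i < m → ¬ s i m := by
  classical
  unfold nextAbove
  split_ifs with h
  · obtain ⟨m, hm⟩ := h
    rw [Set.mem_toFinset] at hm
    exact iff_of_false nofun fun hnone => hnone m hm.1 hm.2
  · exact iff_of_true rfl fun m him hm => h ⟨m, Set.mem_toFinset.2 ⟨him, hm⟩⟩

variable (s)

noncomputable def toArcDiagram : ArcDiagram α where
  next := s.nextAbove
  lt_of_next_eq_some h := (nextAbove_eq_some_iff.1 h).1.1
  eq_of_next_eq_some {i₁ i₂ j} h₁ h₂ := by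
    obtain ⟨⟨hlt₁, hrel₁⟩, hmin₁⟩ := nextAbove_eq_some_iff.1 h₁
    obtain ⟨⟨hlt₂, hrel₂⟩, hmin₂⟩ := nextAbove_eq_some_iff.1 h₂
    by_contra hne
    rcases lt_or_gt_of_ne hne with h | h
    · exact (hmin₁ ⟨h, s.trans hrel₁ (s.symm hrel₂)⟩).not_gt hlt₂
    · exact (hmin₂ ⟨h, s.trans hrel₂ (s.symm hrel₁)⟩).not_gt hlt₁

theorem reflTransGen_step_of_le {a b : α} (hab : s a b) (hle : a ≤ b) :
    Relation.ReflTransGen s.toArcDiagram.Step a b := by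
  induction a using WellFoundedGT.induction with
  | _ a ih =>
    rcases hle.eq_or_lt with rfl | hlt
    · exact .refl
    obtain ⟨c, hc⟩ := Option.ne_none_iff_exists'.1
      (fun h => nextAbove_eq_none_iff.1 h b hlt hab)
    obtain ⟨⟨hac, hrel⟩, hmin⟩ := nextAbove_eq_some_iff.1 hc
    exact .head hc (ih c hac (s.trans (s.symm hrel) hab) (hmin ⟨hlt, hab⟩))

theorem rel_of_reflTransGen_step {a b : α} (h : Relation.ReflTransGen s.toArcDiagram.Step a b) :
    s a b := by
  induction h with
  | refl => exact s.refl _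
  | tail _ hstep ih => exact s.trans ih (nextAbove_eq_some_iff.1 hstep).1.2

theorem toSetoid_toArcDiagram : s.toArcDiagram.toSetoid = s := by
  ext a b
  constructor
  · rintro (h | h)
    exacts [s.rel_of_reflTransGen_step h, s.symm (s.rel_of_reflTransGen_step h)]
  · intro h
    rcases le_total a b with hle | hle
    exacts [.inl (s.reflTransGen_step_of_le h hle),
      .inr (s.reflTransGen_step_of_le (s.symm h) hle)]

end Setoid

theorem ArcDiagram.toArcDiagram_toSetoid {α : Type*} [LinearOrder α] [Fintype α]
    (D : ArcDiagram α) : D.toSetoid.toArcDiagram = D := by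
  ext1
  funext i
  cases hi : D.next i with
  | none =>
    refine Setoid.nextAbove_eq_none_iff.2 fun m him hm => ?_
    obtain ⟨c, hc, -⟩ := D.exists_next_of_toSetoid_of_lt hm him
    simp [hi] at hc
  | some j =>
    refine Setoid.nextAbove_eq_some_iff.2 ⟨⟨D.lt_of_next_eq_some hi, .inl (.single hi)⟩, ?_⟩
    rintro m ⟨him, hm⟩
    obtain ⟨c, hc, hcm⟩ := D.exists_next_of_toSetoid_of_lt hm him
    rw [hi, Option.some_inj] at hc
    exact hc ▸ D.le_of_reflTransGen hcm

noncomputable def ArcDiagram.setoidEquiv (α : Type*) [LinearOrder α] [Fintype α] :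
    Setoid α ≃ ArcDiagram α where
  toFun := Setoid.toArcDiagram
  invFun := ArcDiagram.toSetoid
  left_inv := Setoid.toSetoid_toArcDiagram
  right_inv := ArcDiagram.toArcDiagram_toSetoid

namespace ArcDiagram

variable {α : Type*} [LinearOrder α] [Fintype α] (D : ArcDiagram α)

def domain : Finset α := {i | (D.next i).isSome}

theorem card_domain_lt [Nonempty α] : #D.domain < Fintype.card α := by
  refine card_lt_univ_of_notMem (x := univ.max' univ_nonempty) ?_
  simp only [domain, mem_filter, mem_univ, true_and, Option.isSome_iff_exists, not_exists]
  exact fun j hj => (D.lt_of_next_eq_some hj).not_ge (le_max' _ _ (mem_univ j))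

end ArcDiagram

abbrev EndpointSeq (α : Type*) [Preorder α] (m : ℕ) : Type _ :=
  Σ k : Fin m, {ab : (Fin (k : ℕ) → α) × (Fin (k : ℕ) → α) //
    StrictMono ab.1 ∧ Function.Injective ab.2 ∧ ∀ i, ab.1 i < ab.2 i}

namespace EndpointSeq

variable {α : Type*} [LinearOrder α] {m : ℕ}

noncomputable def next (x : EndpointSeq α m) (i : α) : Option α :=
  (Function.partialInv x.2.1.1 i).map x.2.1.2

theorem next_eq_some_iff {x : EndpointSeq α m} {i j : α} :
    x.next i = some j ↔ ∃ t, x.2.1.1 t = i ∧ x.2.1.2 t = j := by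
  simp only [next, Option.map_eq_some_iff, x.2.2.1.injective.isPartialInv _ i]

noncomputable def toArcDiagram (x : EndpointSeq α m) : ArcDiagram α where
  next := x.next
  lt_of_next_eq_some h := by
    obtain ⟨t, rfl, rfl⟩ := next_eq_some_iff.1 h
    exact x.2.2.2.2 t
  eq_of_next_eq_some h₁ h₂ := by
    obtain ⟨t₁, rfl, rfl⟩ := next_eq_some_iff.1 h₁
    obtain ⟨t₂, rfl, hb⟩ := next_eq_some_iff.1 h₂
    rw [x.2.2.2.1 hb]

theorem next_apply (x : EndpointSeq α m) (t : Fin x.1) :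
    x.next (x.2.1.1 t) = some (x.2.1.2 t) :=
  next_eq_some_iff.2 ⟨t, rfl, rfl⟩

theorem isSome_next_iff {x : EndpointSeq α m} {i : α} :
    (x.next i).isSome ↔ i ∈ Set.range x.2.1.1 := by
  simp only [Option.isSome_iff_exists, next_eq_some_iff, Set.mem_range]
  exact ⟨fun ⟨_, t, ht, _⟩ => ⟨t, ht⟩, fun ⟨t, ht⟩ => ⟨_, t, ht, rfl⟩⟩

theorem toArcDiagram_injective :
    Function.Injective (toArcDiagram : EndpointSeq α m → ArcDiagram α) := by
  intro x y h
  have hnext : x.next = y.next := congrArg ArcDiagram.next h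
  have hrange : Set.range x.2.1.1 = Set.range y.2.1.1 := by
    ext i
    rw [← isSome_next_iff, ← isSome_next_iff, hnext]
  obtain ⟨k, ⟨a, b⟩, ha, hb, hab⟩ := x
  obtain ⟨k', ⟨a', b'⟩, ha', hb', hab'⟩ := y
  obtain rfl : k = k' := Fin.ext <| by
    simpa only [Nat.card_range_of_injective ha.injective, Nat.card_range_of_injective ha'.injective,
      Nat.card_eq_fintype_card, Fintype.card_fin]
      using congrArg (fun S : Set α => Nat.card S) hrange
  obtain rfl : a = a' := (ha.range_inj ha').1 hrange
  obtain rfl : b = b' := funext fun t => Option.some_injective _ <| by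
    rw [← next_apply ⟨k, ⟨a, b⟩, ha, hb, hab⟩, ← next_apply ⟨k, ⟨a, b'⟩, ha', hb', hab'⟩]
    exact congrFun hnext (a t)
  rfl

theorem toArcDiagram_surjective [Fintype α] [Nonempty α] (hm : Fintype.card α ≤ m) :
    Function.Surjective (toArcDiagram : EndpointSeq α m → ArcDiagram α) := by
  intro D
  let a := D.domain.orderEmbOfFin rfl
  have hdom (t) : (D.next (a t)).isSome := (mem_filter.1 (D.domain.orderEmbOfFin_mem rfl t)).2
  let b t := (D.next (a t)).get (hdom t)
  have hab (t) : D.next (a t) = some (b t) := (Option.some_get _).symm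
  let x : EndpointSeq α m := ⟨⟨#D.domain, D.card_domain_lt.trans_le hm⟩, (a, b), a.strictMono,
    fun t₁ t₂ h => a.injective <|
      D.eq_of_next_eq_some (hab t₁) ((hab t₂).trans (congrArg some h).symm),
    fun t => D.lt_of_next_eq_some (hab t)⟩
  refine ⟨x, ArcDiagram.ext (funext fun i => ?_)⟩
  by_cases hi : i ∈ D.domain
  · obtain ⟨t, rfl⟩ : i ∈ Set.range a := by rwa [range_orderEmbOfFin]
    exact (next_apply x t).trans (hab t).symm
  · have hx : ¬ (x.next i).isSome := by rwa [isSome_next_iff, range_orderEmbOfFin]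
    have hD : ¬ (D.next i).isSome := by simpa [ArcDiagram.domain] using hi
    rw [Option.not_isSome_iff_eq_none] at hx hD
    exact hx.trans hD.symm

end EndpointSeq

/-- the number of set partitions of {1,...,n} equals the number of
pairs of sequences (a₁,...,a_k), (b₁,...,b_k) (some 0 ≤ k ≤ n-1) with a strictly
increasing, b pairwise distinct, aᵢ < bᵢ, all entries in {1,...,n}. -/
theorem stmt0 (n : ℕ) (hn : 1 ≤ n) :
    Nat.card (Finpartition (univ : Finset (Fin n))) =
      Nat.card (Σ k : Fin n, {ab : (Fin (k : ℕ) → Fin n) × (Fin (k : ℕ) → Fin n) //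
        StrictMono ab.1 ∧ Function.Injective ab.2 ∧ ∀ i, ab.1 i < ab.2 i}) := by
  have : Nonempty (Fin n) := Fin.pos_iff_nonempty.1 hn
  let e : EndpointSeq (Fin n) n ≃ ArcDiagram (Fin n) := Equiv.ofBijective _
    ⟨EndpointSeq.toArcDiagram_injective,
      EndpointSeq.toArcDiagram_surjective (Fintype.card_fin n).le⟩
  exact Nat.card_congr (Finpartition.equivSetoid.trans ((ArcDiagram.setoidEquiv _).trans e.symm))
end

section
/- Let p be prime with p > n and G a graph on {1,...,n}. For a subset S ⊆ G, let g(S) be the number of vectors v ∈ (Z/p)^n with pairwise distinct coordinates and v_1 - v_j = i for all edges ij ∈ S (i < j). If S is the arc set of a set partition of {1,...,n} with n-k blocks (so |S| = k), then g(S) = p·(p-k-1)!/(p-n)!. -/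
open Finset Nat

/-- for prime p > n and S the arc set of a set partition of {1,...,n}
with n-k blocks (so |S| = k, left endpoints pairwise distinct and right endpoints
pairwise distinct), the number g(S) of vectors v ∈ (ℤ/p)ⁿ with pairwise distinct
coordinates and v₁ - vⱼ = i for all edges ij ∈ S (vertex labelled r ↔ index r-1)
equals p (p-k-1)!/(p-n)!. -/
theorem stmt9 (n p k : ℕ) (hn : 0 < n) (hp : p.Prime) (hpn : n < p)
    (S : Finset (Fin n × Fin n)) (hS : ∀ e ∈ S, e.1 < e.2)
    (hdist : ∀ e ∈ S, ∀ e' ∈ S, e ≠ e' → e.1 ≠ e'.1 ∧ e.2 ≠ e'.2)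
    (hcard : S.card = k) :
    Nat.card {v : Fin n → ZMod p // (∀ i j : Fin n, i < j → v i ≠ v j) ∧
        ∀ e ∈ S, v ⟨0, hn⟩ - v e.2 = (((e.1 : ℕ) + 1 : ℕ) : ZMod p)} =
      p * ((p - k - 1)! / (p - n)!) := by
  classical
  haveI : Fact p.Prime := ⟨hp⟩
  haveI : NeZero p := ⟨hp.ne_zero⟩
  set z : Fin n := ⟨0, hn⟩ with hz
  have hinjP : ∀ v : Fin n → ZMod p, (∀ i j : Fin n, i < j → v i ≠ v j) →
      Function.Injective v := by
    intro v h i j hij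
    by_contra hne
    rcases lt_or_gt_of_ne hne with hl | hl
    · exact h i j hl hij
    · exact h j i hl hij.symm
  have hcast_inj : ∀ a b : ℕ, a < p → b < p → (a : ZMod p) = (b : ZMod p) → a = b := by
    intro a b ha hb hab
    have := congrArg ZMod.val hab
    rwa [ZMod.val_cast_of_lt ha, ZMod.val_cast_of_lt hb] at this
  have hne0 : ∀ e ∈ S, (((e.1 : ℕ) + 1 : ℕ) : ZMod p) ≠ 0 := by
    intro e he h
    have hd : p ∣ (e.1 : ℕ) + 1 := (ZMod.natCast_eq_zero_iff _ _).mp h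
    have h1 := Nat.le_of_dvd (by omega) hd
    have h2 := e.1.isLt
    omega
  have hcinj : ∀ e ∈ S, ∀ e' ∈ S,
      (((e.1 : ℕ) + 1 : ℕ) : ZMod p) = (((e'.1 : ℕ) + 1 : ℕ) : ZMod p) → e = e' := by
    intro e he e' he' h
    by_contra hne
    have h1 := (hdist e he e' he' hne).1
    have h2 := hcast_inj _ _ (by have := e.1.isLt; omega) (by have := e'.1.isLt; omega) h
    exact h1 (Fin.ext (by omega))
  set R : Finset (Fin n) := S.image Prod.snd with hRdef
  have hmemR : ∀ i : Fin n, i ∈ R ↔ ∃ e ∈ S, e.2 = i := by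
    intro i; simp [hRdef]
  have hRcard : R.card = k := by
    rw [hRdef, Finset.card_image_of_injOn, hcard]
    intro e he e' he' h
    by_contra hne
    exact (hdist e (Finset.mem_coe.mp he) e' (Finset.mem_coe.mp he') hne).2 h
  have hzR : z ∉ R := by
    rw [hmemR]
    rintro ⟨e, he, h2⟩
    have h1 := hS e he
    rw [h2] at h1
    have := Fin.lt_def.mp h1
    simp [hz] at this
  set cst : Fin n → ZMod p :=
    fun j => ∑ e ∈ S.filter (fun e => e.2 = j), (((e.1 : ℕ) + 1 : ℕ) : ZMod p) with hcstdef
  have hcst : ∀ e ∈ S, cst e.2 = (((e.1 : ℕ) + 1 : ℕ) : ZMod p) := by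
    intro e he
    have hfe : S.filter (fun e' => e'.2 = e.2) = {e} := by
      ext e'
      simp only [Finset.mem_filter, Finset.mem_singleton]
      constructor
      · rintro ⟨he', h2⟩
        by_contra hne
        exact (hdist e' he' e he hne).2 h2
      · rintro rfl; exact ⟨he, rfl⟩
    rw [hcstdef]
    simp [hfe]
  set C : Finset (ZMod p) := S.image (fun e => -(((e.1 : ℕ) + 1 : ℕ) : ZMod p)) with hCdef
  have hmemC : ∀ x, x ∈ C ↔ ∃ e ∈ S, -(((e.1 : ℕ) + 1 : ℕ) : ZMod p) = x := by
    intro x; simp [hCdef]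
  have hCcard : C.card = k := by
    rw [hCdef, Finset.card_image_of_injOn, hcard]
    intro e he e' he' h
    exact hcinj e (Finset.mem_coe.mp he) e' (Finset.mem_coe.mp he') (neg_injective h)
  have h0C : (0 : ZMod p) ∉ C := by
    rw [hmemC 0]
    rintro ⟨e, he, h⟩
    exact hne0 e he (by rwa [neg_eq_zero] at h)
  have hk1n : k + 1 ≤ n := by
    have h1 : (insert z R).card = k + 1 := by
      rw [Finset.card_insert_of_notMem hzR, hRcard]
    have h2 := Finset.card_le_univ (insert z R)
    rw [h1] at h2
    simpa using h2
  have hA : Fintype.card {i : Fin n // i ∉ insert z R} = n - (k + 1) := by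
    rw [Fintype.card_subtype]
    have h1 : Finset.univ.filter (fun i : Fin n => i ∉ insert z R) =
        Finset.univ \ insert z R := by
      rw [Finset.sdiff_eq_filter]
    rw [h1, Finset.card_sdiff_of_subset (Finset.subset_univ _), Finset.card_insert_of_notMem hzR,
      hRcard, Finset.card_univ, Fintype.card_fin]
  have hB : Fintype.card {x : ZMod p // x ∉ insert (0 : ZMod p) C} = p - (k + 1) := by
    rw [Fintype.card_subtype]
    have h1 : Finset.univ.filter (fun x : ZMod p => x ∉ insert (0 : ZMod p) C) =
        Finset.univ \ insert (0 : ZMod p) C := by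
      rw [Finset.sdiff_eq_filter]
    rw [h1, Finset.card_sdiff_of_subset (Finset.subset_univ _), Finset.card_insert_of_notMem h0C,
      hCcard, Finset.card_univ, ZMod.card]
  -- the reconstruction function
  set vfun : ZMod p →
      ({i : Fin n // i ∉ insert z R} ↪ {x : ZMod p // x ∉ insert (0 : ZMod p) C}) →
      Fin n → ZMod p := fun x g i =>
    if hiz : i = z then x
    else if hiR : i ∈ R then x - cst i
    else x + (g ⟨i, by simp [Finset.mem_insert, hiz, hiR]⟩).1 with hvfundef
  have hvz : ∀ x g, vfun x g z = x := by intro x g; simp [hvfundef]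
  have hvR : ∀ x g, ∀ i ∈ R, vfun x g i = x - cst i := by
    intro x g i hiR
    have hiz : i ≠ z := fun h => hzR (h ▸ hiR)
    simp [hvfundef, hiz, hiR]
  have hvA : ∀ x g (i : Fin n) (h : i ∉ insert z R), vfun x g i = x + (g ⟨i, h⟩).1 := by
    intro x g i h
    have h1 : ¬ i = z := fun hh => h (by simp [hh])
    have h2 : i ∉ R := fun hh => h (Finset.mem_insert_of_mem hh)
    simp [hvfundef, h1, h2]
  have hcstR : ∀ i ∈ R, ∃ e ∈ S, e.2 = i ∧ cst i = (((e.1 : ℕ) + 1 : ℕ) : ZMod p) := by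
    intro i hiR
    obtain ⟨e, he, h2⟩ := (hmemR i).mp hiR
    exact ⟨e, he, h2, h2 ▸ hcst e he⟩
  have hcst_ne0 : ∀ i ∈ R, cst i ≠ 0 := by
    intro i hiR
    obtain ⟨e, he, -, h⟩ := hcstR i hiR
    rw [h]; exact hne0 e he
  have hcst_negC : ∀ i ∈ R, -cst i ∈ C := by
    intro i hiR
    obtain ⟨e, he, -, h⟩ := hcstR i hiR
    rw [h, hmemC]; exact ⟨e, he, rfl⟩
  have hcst_injR : ∀ i ∈ R, ∀ j ∈ R, cst i = cst j → i = j := by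
    intro i hiR j hjR h
    obtain ⟨e, he, h2, hc⟩ := hcstR i hiR
    obtain ⟨e', he', h2', hc'⟩ := hcstR j hjR
    have h3 := hcinj e he e' he' (by rw [← hc, ← hc', h])
    rw [← h2, ← h2', h3]
  have hgprop : ∀ (g : {i : Fin n // i ∉ insert z R} ↪ {x : ZMod p // x ∉ insert (0 : ZMod p) C})
      (a : {i : Fin n // i ∉ insert z R}), (g a).1 ≠ 0 ∧ (g a).1 ∉ C := by
    intro g a
    have := (g a).2
    simp only [Finset.mem_insert, not_or] at this
    exact this
  have hvinj : ∀ x g, Function.Injective (vfun x g) := by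
    intro x g i j hij
    by_contra hne
    by_cases hiz : i = z
    · subst hiz
      rw [hvz] at hij
      by_cases hjR : j ∈ R
      · rw [hvR x g j hjR] at hij
        exact hcst_ne0 j hjR (by linear_combination hij)
      · have hjm : j ∉ insert z R := by
          simp [Finset.mem_insert, hjR]
          intro h; exact hne h.symm
        rw [hvA x g j hjm] at hij
        exact (hgprop g ⟨j, hjm⟩).1 (by linear_combination - hij)
    · by_cases hjz : j = z
      · subst hjz
        rw [hvz] at hij
        by_cases hiR : i ∈ R
        · rw [hvR x g i hiR] at hij
          exact hcst_ne0 i hiR (by linear_combination - hij)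
        · have him : i ∉ insert z R := by simp [Finset.mem_insert, hiR, hiz]
          rw [hvA x g i him] at hij
          exact (hgprop g ⟨i, him⟩).1 (by linear_combination hij)
      · by_cases hiR : i ∈ R <;> by_cases hjR : j ∈ R
        · rw [hvR x g i hiR, hvR x g j hjR] at hij
          exact hne (hcst_injR i hiR j hjR (by linear_combination - hij))
        · have hjm : j ∉ insert z R := by simp [Finset.mem_insert, hjR, hjz]
          rw [hvR x g i hiR, hvA x g j hjm] at hij
          have : (g ⟨j, hjm⟩).1 = -cst i := by linear_combination - hij
          exact (hgprop g ⟨j, hjm⟩).2 (this ▸ hcst_negC i hiR)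
        · have him : i ∉ insert z R := by simp [Finset.mem_insert, hiR, hiz]
          rw [hvA x g i him, hvR x g j hjR] at hij
          have : (g ⟨i, him⟩).1 = -cst j := by linear_combination hij
          exact (hgprop g ⟨i, him⟩).2 (this ▸ hcst_negC j hjR)
        · have him : i ∉ insert z R := by simp [Finset.mem_insert, hiR, hiz]
          have hjm : j ∉ insert z R := by simp [Finset.mem_insert, hjR, hjz]
          rw [hvA x g i him, hvA x g j hjm] at hij
          have h1 : (g ⟨i, him⟩ : {x : ZMod p // x ∉ insert (0 : ZMod p) C}) = g ⟨j, hjm⟩ :=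
            Subtype.ext (by linear_combination hij)
          have h2 := g.injective h1
          exact hne (congrArg Subtype.val h2)
  have hvcon : ∀ x g, ∀ e ∈ S, vfun x g z - vfun x g e.2 = (((e.1 : ℕ) + 1 : ℕ) : ZMod p) := by
    intro x g e he
    have h2R : e.2 ∈ R := (hmemR _).mpr ⟨e, he, rfl⟩
    rw [hvz, hvR x g _ h2R, hcst e he]
    ring
  -- the equivalence
  have E : {v : Fin n → ZMod p // (∀ i j : Fin n, i < j → v i ≠ v j) ∧
        ∀ e ∈ S, v z - v e.2 = (((e.1 : ℕ) + 1 : ℕ) : ZMod p)} ≃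
      ZMod p × ({i : Fin n // i ∉ insert z R} ↪ {x : ZMod p // x ∉ insert (0 : ZMod p) C}) := by
    refine ⟨fun vp => ⟨vp.1 z, ⟨fun a => ⟨vp.1 a.1 - vp.1 z, ?_⟩, ?_⟩⟩,
      fun xg => ⟨vfun xg.1 xg.2,
        fun i j hlt h => absurd (hvinj xg.1 xg.2 h) (ne_of_lt hlt), hvcon xg.1 xg.2⟩,
      ?_, ?_⟩
    · -- membership of the forward values
      obtain ⟨v, hv1, hv2⟩ := vp
      have hinj := hinjP v hv1
      simp only [Finset.mem_insert, not_or]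
      constructor
      · intro h
        have h2 : v a.1 = v z := by linear_combination h
        have h3 := hinj h2
        exact a.2 (by simp [Finset.mem_insert, h3])
      · intro hC
        obtain ⟨e, he, hE⟩ := (hmemC _).mp hC
        have h2 := hv2 e he
        have h3 : v a.1 = v e.2 := by linear_combination - hE + h2
        have h4 := hinj h3
        exact a.2 (by
          rw [h4]
          exact Finset.mem_insert_of_mem ((hmemR _).mpr ⟨e, he, rfl⟩))
    · -- injectivity of the forward embedding
      obtain ⟨v, hv1, hv2⟩ := vp
      intro a a' h
      have h1 : v a.1 - v z = v a'.1 - v z := congrArg Subtype.val h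
      have h2 : v a.1 = v a'.1 := by linear_combination h1
      exact Subtype.ext (hinjP v hv1 h2)
    · -- left inverse
      intro vp
      obtain ⟨v, hv1, hv2⟩ := vp
      apply Subtype.ext
      funext i
      dsimp only
      by_cases hiz : i = z
      · subst hiz; rw [hvz]
      · by_cases hiR : i ∈ R
        · rw [hvR _ _ i hiR]
          obtain ⟨e, he, h2, hc⟩ := hcstR i hiR
          have h3 := hv2 e he
          rw [hc, ← h2]
          linear_combination h3
        · have him : i ∉ insert z R := by simp [Finset.mem_insert, hiR, hiz]
          rw [hvA _ _ i him]
          show v z + (v i - v z) = v i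
          ring
    · -- right inverse
      rintro ⟨x, g⟩
      refine Prod.ext_iff.mpr ⟨hvz x g, ?_⟩
      apply Function.Embedding.ext
      intro a
      apply Subtype.ext
      show vfun x g a.1 - vfun x g z = (g a).1
      rw [hvA x g a.1 a.2, hvz]
      show x + (g a).1 - x = (g a).1
      rw [add_sub_cancel_left]
  rw [Nat.card_congr E, Nat.card_prod, Nat.card_eq_fintype_card, Nat.card_eq_fintype_card,
    Fintype.card_embedding_eq, hA, hB, ZMod.card,
    Nat.descFactorial_eq_div (by omega : n - (k + 1) ≤ p - (k + 1))]
  rw [show p - (k + 1) - (n - (k + 1)) = p - n from by omega,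
    show p - (k + 1) = p - k - 1 from by omega]
end

section
/- Fix distinct symbols 1, b_1, ..., b_m in {1,...,n} (m = n-k, so k = n-m blocks), and fix d with 1 ≤ d ≤ k. The number of permutations w of {1,...,n} satisfying w^{-1}(1) < w^{-1}(b_1) < ... < w^{-1}(b_m) and w^{-1}(b_m) - w^{-1}(1) = n - d equals d · (n-d-1)! · (k-1)! / ((n-k-1)! · (k-d)!), provided m ≥ 1. -/
open Finset Nat


private def Fdef (n m d : ℕ) (hm : 0 < m) (hdmn : d + m ≤ n) (p : Fin d)
    (h : Fin (m-1) → Fin (n-d-1)) (i : Fin (m+1)) : Fin n :=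
  if _h0 : (i : ℕ) = 0 then ⟨(p : ℕ), by omega⟩
  else if _hm2 : (i : ℕ) = m then ⟨(p : ℕ) + (n - d), by omega⟩
  else ⟨(p : ℕ) + 1 + (h ⟨(i : ℕ) - 1, by omega⟩ : ℕ), by omega⟩

private lemma Fdef_zero (n m d : ℕ) (hm : 0 < m) (hdmn : d + m ≤ n) (p : Fin d)
    (h : Fin (m-1) → Fin (n-d-1)) :
    (Fdef n m d hm hdmn p h 0 : ℕ) = (p : ℕ) := by
  unfold Fdef
  rw [dif_pos (by simp), Fin.val_mk]

private lemma Fdef_last (n m d : ℕ) (hm : 0 < m) (hdmn : d + m ≤ n) (p : Fin d)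
    (h : Fin (m-1) → Fin (n-d-1)) :
    (Fdef n m d hm hdmn p h (Fin.last m) : ℕ) = (p : ℕ) + (n - d) := by
  unfold Fdef
  simp only [Fin.val_last]
  rw [dif_neg (by omega), dif_pos trivial, Fin.val_mk]

private lemma Fdef_mid (n m d : ℕ) (hm : 0 < m) (hdmn : d + m ≤ n) (p : Fin d)
    (h : Fin (m-1) → Fin (n-d-1)) (i : Fin (m+1)) (hi0 : (i : ℕ) ≠ 0) (him : (i : ℕ) ≠ m) :
    (Fdef n m d hm hdmn p h i : ℕ) = (p : ℕ) + 1 + (h ⟨(i : ℕ) - 1, by omega⟩ : ℕ) := by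
  unfold Fdef
  rw [dif_neg hi0, dif_neg him, Fin.val_mk]

private lemma Fdef_mono (n m d : ℕ) (hm : 0 < m) (hdmn : d + m ≤ n) (p : Fin d)
    (h : Fin (m-1) → Fin (n-d-1)) (hh : StrictMono h) :
    StrictMono (Fdef n m d hm hdmn p h) := by
  intro i j hij
  rw [Fin.lt_def] at hij ⊢
  have hjb : (j : ℕ) < m + 1 := j.isLt
  by_cases hi0 : (i : ℕ) = 0
  · have hieq : i = 0 := Fin.ext (by simp [hi0])
    rw [hieq, Fdef_zero]
    by_cases hjm : (j : ℕ) = m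
    · have hjeq : j = Fin.last m := Fin.ext (by simp [hjm])
      rw [hjeq, Fdef_last]; omega
    · have hj0 : (j : ℕ) ≠ 0 := by omega
      rw [Fdef_mid n m d hm hdmn p h j hj0 hjm]; omega
  · by_cases him : (i : ℕ) = m
    · omega
    · rw [Fdef_mid n m d hm hdmn p h i hi0 him]
      by_cases hjm : (j : ℕ) = m
      · have hjeq : j = Fin.last m := Fin.ext (by simp [hjm])
        have hb := (h ⟨(i : ℕ) - 1, by omega⟩).isLt
        rw [hjeq, Fdef_last]; omega
      · have hj0 : (j : ℕ) ≠ 0 := by omega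
        rw [Fdef_mid n m d hm hdmn p h j hj0 hjm]
        have hmono := hh (show (⟨(i : ℕ) - 1, by omega⟩ : Fin (m-1)) <
            ⟨(j : ℕ) - 1, by omega⟩ by rw [Fin.mk_lt_mk]; omega)
        rw [Fin.lt_def] at hmono
        omega

private lemma Fdef_span (n m d : ℕ) (hm : 0 < m) (hdmn : d + m ≤ n) (p : Fin d)
    (h : Fin (m-1) → Fin (n-d-1)) :
    (Fdef n m d hm hdmn p h (Fin.last m) : ℕ) - (Fdef n m d hm hdmn p h 0 : ℕ) = n - d := by
  rw [Fdef_last, Fdef_zero]; omega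

lemma my_card_strictMono (r s : ℕ) :
    Fintype.card {h : Fin r → Fin s // StrictMono h} = Nat.choose s r := by
  have e : {h : Fin r → Fin s // StrictMono h} ≃ {t : Finset (Fin s) // t.card = r} :=
    { toFun := fun h => ⟨Finset.univ.image h.1, by
        rw [Finset.card_image_of_injective _ h.2.injective, Finset.card_univ, Fintype.card_fin]⟩
      invFun := fun t => ⟨t.1.orderEmbOfFin t.2, (t.1.orderEmbOfFin t.2).strictMono⟩
      left_inv := fun h => Subtype.ext
        ((Finset.orderEmbOfFin_unique _
          (fun x => Finset.mem_image_of_mem _ (Finset.mem_univ x)) h.2).symm)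
      right_inv := fun t => Subtype.ext (by
        apply Finset.coe_injective
        rw [Finset.coe_image, Finset.coe_univ, Set.image_univ]
        exact Finset.range_orderEmbOfFin _ _) }
  rw [Fintype.card_congr e, Fintype.card_finset_len, Fintype.card_fin]

lemma my_card_G (n m d : ℕ) (hm : 0 < m) (hd1 : 1 ≤ d) (hdmn : d + m ≤ n) :
    Fintype.card {g : Fin (m+1) → Fin n // StrictMono g ∧
        ((g (Fin.last m) : ℕ) - (g 0 : ℕ) = n - d)} =
      d * Nat.choose (n - d - 1) (m - 1) := by
  have key : {g : Fin (m+1) → Fin n // StrictMono g ∧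
        ((g (Fin.last m) : ℕ) - (g 0 : ℕ) = n - d)} ≃
      Fin d × {h : Fin (m-1) → Fin (n-d-1) // StrictMono h} := by
    refine
      { toFun := fun g => (⟨(g.1 0 : ℕ), ?_⟩,
          ⟨fun j => ⟨(g.1 ⟨(j : ℕ) + 1, by omega⟩ : ℕ) - (g.1 0 : ℕ) - 1, ?_⟩, ?_⟩)
        invFun := fun pq => ⟨Fdef n m d hm hdmn pq.1 pq.2.1,
          Fdef_mono n m d hm hdmn pq.1 pq.2.1 pq.2.2, Fdef_span n m d hm hdmn pq.1 pq.2.1⟩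
        left_inv := ?_
        right_inv := ?_ }
    · -- g 0 < d
      have h1 : (g.1 0 : ℕ) < (g.1 (Fin.last m) : ℕ) := by
        have := g.2.1 (show (0 : Fin (m+1)) < Fin.last m by
          rw [Fin.lt_def]; simp only [Fin.val_zero, Fin.val_last]; omega)
        rwa [Fin.lt_def] at this
      have h2 : (g.1 (Fin.last m) : ℕ) < n := (g.1 (Fin.last m)).isLt
      have h3 := g.2.2
      omega
    · -- middle value bound
      have hlow : (g.1 0 : ℕ) < (g.1 ⟨(j : ℕ) + 1, by omega⟩ : ℕ) := by
        have := g.2.1 (show (0 : Fin (m+1)) < ⟨(j : ℕ) + 1, by omega⟩ by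
          rw [Fin.lt_def]; simp only [Fin.val_zero, Fin.val_mk]; omega)
        rwa [Fin.lt_def] at this
      have hhigh : (g.1 ⟨(j : ℕ) + 1, by omega⟩ : ℕ) < (g.1 (Fin.last m) : ℕ) := by
        have := g.2.1 (show (⟨(j : ℕ) + 1, by omega⟩ : Fin (m+1)) < Fin.last m by
          rw [Fin.lt_def]; simp only [Fin.val_last, Fin.val_mk]; omega)
        rwa [Fin.lt_def] at this
      have h2 : (g.1 (Fin.last m) : ℕ) < n := (g.1 (Fin.last m)).isLt
      have h3 := g.2.2
      omega
    · -- middle fun strict mono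
      intro j j' hjj'
      rw [Fin.lt_def] at hjj'
      rw [Fin.mk_lt_mk]
      have hlow : (g.1 0 : ℕ) < (g.1 ⟨(j : ℕ) + 1, by omega⟩ : ℕ) := by
        have := g.2.1 (show (0 : Fin (m+1)) < ⟨(j : ℕ) + 1, by omega⟩ by
          rw [Fin.lt_def]; simp only [Fin.val_zero, Fin.val_mk]; omega)
        rwa [Fin.lt_def] at this
      have hstep : (g.1 ⟨(j : ℕ) + 1, by omega⟩ : ℕ) < (g.1 ⟨(j' : ℕ) + 1, by omega⟩ : ℕ) := by
        have := g.2.1 (show (⟨(j : ℕ) + 1, by omega⟩ : Fin (m+1)) < ⟨(j' : ℕ) + 1, by omega⟩ by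
          rw [Fin.mk_lt_mk]; omega)
        rwa [Fin.lt_def] at this
      omega
    · -- left_inv
      intro g
      apply Subtype.ext
      funext i
      apply Fin.ext
      by_cases hi0 : (i : ℕ) = 0
      · have hieq : i = 0 := Fin.ext (by simp [hi0])
        rw [hieq, Fdef_zero, Fin.val_mk]
      · by_cases him : (i : ℕ) = m
        · have hieq : i = Fin.last m := Fin.ext (by simp [him])
          rw [hieq, Fdef_last, Fin.val_mk]
          have h1 : (g.1 0 : ℕ) < (g.1 (Fin.last m) : ℕ) := by
            have := g.2.1 (show (0 : Fin (m+1)) < Fin.last m by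
              rw [Fin.lt_def]; simp only [Fin.val_zero, Fin.val_last]; omega)
            rwa [Fin.lt_def] at this
          have h3 := g.2.2
          omega
        · rw [Fdef_mid n m d hm hdmn _ _ i hi0 him]
          simp only [Fin.val_mk]
          have hidx : (⟨(i : ℕ) - 1 + 1, by omega⟩ : Fin (m+1)) = i :=
            Fin.ext (show (i : ℕ) - 1 + 1 = (i : ℕ) by omega)
          rw [hidx]
          have hlow : (g.1 0 : ℕ) < (g.1 i : ℕ) := by
            have := g.2.1 (show (0 : Fin (m+1)) < i by
              rw [Fin.lt_def]; simp only [Fin.val_zero]; omega)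
            rwa [Fin.lt_def] at this
          omega
    · -- right_inv
      intro pq
      apply Prod.ext
      · apply Fin.ext
        rw [Fin.val_mk, Fdef_zero]
      · apply Subtype.ext
        funext j
        apply Fin.ext
        rw [Fin.val_mk, Fdef_zero,
          Fdef_mid n m d hm hdmn pq.1 pq.2.1 ⟨(j : ℕ) + 1, by omega⟩
            (by simp only [Fin.val_mk]; omega) (by simp only [Fin.val_mk]; omega)]
        simp only [Fin.val_mk]
        have hidx : (⟨(j : ℕ) + 1 - 1, by omega⟩ : Fin (m-1)) = j :=
          Fin.ext (show (j : ℕ) + 1 - 1 = (j : ℕ) by omega)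
        rw [hidx]
        omega
  rw [Fintype.card_congr key, Fintype.card_prod, Fintype.card_fin, my_card_strictMono]

lemma my_card_fiber {n r : ℕ} (c g : Fin r → Fin n) (hc : Function.Injective c)
    (hg : Function.Injective g) :
    Nat.card {u : Equiv.Perm (Fin n) // ∀ i, u (c i) = g i} = (n - r)! := by
  classical
  set e₀ : (Set.range c) ≃ (Set.range g) :=
    (Equiv.ofInjective c hc).symm.trans (Equiv.ofInjective g hg) with he₀def
  have he₀ : ∀ i, (e₀ ⟨c i, Set.mem_range_self i⟩ : Fin n) = g i := by
    intro i
    have h1 : (⟨c i, Set.mem_range_self i⟩ : Set.range c) = Equiv.ofInjective c hc i := rfl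
    rw [he₀def, Equiv.trans_apply, h1, Equiv.symm_apply_apply, Equiv.ofInjective_apply]
  have e1 : {u : Equiv.Perm (Fin n) // ∀ i, u (c i) = g i} ≃
      {u : Fin n ≃ Fin n // ∀ x : Set.range c, u x = e₀ x} :=
    Equiv.subtypeEquivRight (fun u => by
      constructor
      · rintro h ⟨x, i, rfl⟩
        rw [he₀ i]
        exact h i
      · intro h i
        rw [h ⟨c i, Set.mem_range_self i⟩, he₀ i])
  have hrc : Fintype.card (Set.range c) = r := by
    rw [Set.card_range_of_injective hc, Fintype.card_fin]
  have hrg : Fintype.card (Set.range g) = r := by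
    rw [Set.card_range_of_injective hg, Fintype.card_fin]
  have hcc : Fintype.card ((Set.range c)ᶜ : Set (Fin n)) = n - r := by
    rw [Fintype.card_compl_set, hrc, Fintype.card_fin]
  have hcg : Fintype.card ((Set.range g)ᶜ : Set (Fin n)) = n - r := by
    rw [Fintype.card_compl_set, hrg, Fintype.card_fin]
  rw [Nat.card_congr (e1.trans (Equiv.Set.compl e₀)), Nat.card_eq_fintype_card,
    Fintype.card_equiv (Fintype.equivOfCardEq (hcc.trans hcg.symm)), hcc]

lemma my_main_count (n m d : ℕ) (c : Fin (m+1) → Fin n) (hc : Function.Injective c) :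
    Nat.card {w : Equiv.Perm (Fin n) //
        StrictMono (fun i : Fin (m+1) => w.symm (c i)) ∧
        ((w.symm (c (Fin.last m)) : ℕ) - (w.symm (c 0) : ℕ) = n - d)} =
      Fintype.card {g : Fin (m+1) → Fin n // StrictMono g ∧
        ((g (Fin.last m) : ℕ) - (g 0 : ℕ) = n - d)} * (n - (m+1))! := by
  set TG := {g : Fin (m+1) → Fin n // StrictMono g ∧
        ((g (Fin.last m) : ℕ) - (g 0 : ℕ) = n - d)} with hTG
  set A := {w : Equiv.Perm (Fin n) //
        StrictMono (fun i : Fin (m+1) => w.symm (c i)) ∧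
        ((w.symm (c (Fin.last m)) : ℕ) - (w.symm (c 0) : ℕ) = n - d)} with hA
  let Phi : A → TG := fun w => ⟨fun i => w.1.symm (c i), w.2.1, w.2.2⟩
  classical
  rw [← Nat.card_congr (Equiv.sigmaFiberEquiv Phi)]
  rw [Nat.card_eq_fintype_card, Fintype.card_sigma]
  have hfib : ∀ g : TG, Fintype.card {w : A // Phi w = g} = (n - (m+1))! := by
    intro g
    rw [← Nat.card_eq_fintype_card]
    have e : {w : A // Phi w = g} ≃ {u : Equiv.Perm (Fin n) // ∀ i, u (c i) = g.1 i} :=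
      { toFun := fun w => ⟨w.1.1.symm, fun i => congrFun (congrArg Subtype.val w.2) i⟩
        invFun := fun v => ⟨⟨v.1.symm, by
            constructor
            · have hfe : (fun i : Fin (m+1) => v.1.symm.symm (c i)) = g.1 :=
                funext fun i => by rw [Equiv.symm_symm]; exact v.2 i
              rw [hfe]
              exact g.2.1
            · have h1 : v.1.symm.symm (c (Fin.last m)) = g.1 (Fin.last m) := by
                rw [Equiv.symm_symm]; exact v.2 _
              have h0 : v.1.symm.symm (c 0) = g.1 0 := by
                rw [Equiv.symm_symm]; exact v.2 _
              show ((v.1.symm.symm (c (Fin.last m)) : ℕ) - (v.1.symm.symm (c 0) : ℕ) = n - d)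
              rw [h1, h0]
              exact g.2.2⟩,
          Subtype.ext (funext fun i => by
            show v.1.symm.symm (c i) = g.1 i
            rw [Equiv.symm_symm]; exact v.2 i)⟩
        left_inv := fun w => Subtype.ext (Subtype.ext (Equiv.symm_symm _))
        right_inv := fun v => Subtype.ext (Equiv.symm_symm _) }
    rw [Nat.card_congr e, my_card_fiber c g.1 hc g.2.1.injective]
  calc ∑ g : TG, Fintype.card {w : A // Phi w = g}
      = ∑ _g : TG, (n - (m+1))! := Finset.sum_congr rfl (fun g _ => hfib g)
    _ = Fintype.card TG * (n - (m+1))! := by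
        rw [Finset.sum_const, Finset.card_univ, smul_eq_mul]
/-- with distinct symbols 1, b₁, ..., bₘ in {1,...,n} (m = n - k ≥ 1,
vertex labelled r ↔ index r-1) and 1 ≤ d ≤ k, the number of permutations w with
w⁻¹(1) < w⁻¹(b₁) < ⋯ < w⁻¹(bₘ) and w⁻¹(bₘ) - w⁻¹(1) = n - d equals
d (n-d-1)! (k-1)! / ((n-k-1)! (k-d)!). -/
theorem stmt11 (n m k d : ℕ) (hn : 0 < n) (hm : 0 < m) (hk : k = n - m)
    (hd1 : 1 ≤ d) (hdk : d ≤ k)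
    (b : Fin m → Fin n) (hb : Function.Injective b) (hb0 : ∀ i, b i ≠ ⟨0, hn⟩) :
    Nat.card {w : Equiv.Perm (Fin n) //
        StrictMono (fun i : Fin (m + 1) =>
          w.symm ((Fin.cons (⟨0, hn⟩ : Fin n) b : Fin (m + 1) → Fin n) i)) ∧
        (w.symm (b ⟨m - 1, by omega⟩) : ℕ) - (w.symm ⟨0, hn⟩ : ℕ) = n - d} =
      d * (n - d - 1)! * (k - 1)! / ((n - k - 1)! * (k - d)!) := by
  have hmn : m < n := by omega
  set c : Fin (m + 1) → Fin n := (Fin.cons (⟨0, hn⟩ : Fin n) b : Fin (m + 1) → Fin n)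
    with hcdef
  have hc : Function.Injective c := by
    rw [hcdef]
    refine Fin.cons_injective_iff.mpr ⟨?_, hb⟩
    rintro ⟨i, hi⟩
    exact hb0 i hi
  have hc0 : c 0 = ⟨0, hn⟩ := Fin.cons_zero _ _
  have hclast : c (Fin.last m) = b ⟨m - 1, by omega⟩ := by
    have h1 : Fin.last m = Fin.succ ⟨m - 1, by omega⟩ := by
      rw [Fin.ext_iff]
      simp only [Fin.val_last, Fin.val_succ, Fin.val_mk]
      omega
    rw [h1, hcdef]
    exact Fin.cons_succ _ _ _
  have hiff : ∀ w : Equiv.Perm (Fin n),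
      (StrictMono (fun i : Fin (m + 1) => w.symm (c i)) ∧
        ((w.symm (b ⟨m - 1, by omega⟩) : ℕ) - (w.symm ⟨0, hn⟩ : ℕ) = n - d))
      ↔ (StrictMono (fun i : Fin (m + 1) => w.symm (c i)) ∧
        ((w.symm (c (Fin.last m)) : ℕ) - (w.symm (c 0) : ℕ) = n - d)) := fun w => by
    rw [hclast, hc0]
  refine Eq.trans (Nat.card_congr (Equiv.subtypeEquivRight hiff)) ?_
  rw [my_main_count n m d c hc, my_card_G n m d hm hd1 (by omega)]
  have h1 : n - (m + 1) = k - 1 := by omega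
  have h2 : n - k - 1 = m - 1 := by omega
  rw [h1, h2, Nat.choose_eq_factorial_div_factorial (show m - 1 ≤ n - d - 1 by omega)]
  have h3 : n - d - 1 - (m - 1) = k - d := by omega
  rw [h3]
  have hdvd : (m - 1)! * (k - d)! ∣ (n - d - 1)! := by
    have h4 := Nat.factorial_mul_factorial_dvd_factorial_add (m - 1) (k - d)
    rwa [show m - 1 + (k - d) = n - d - 1 by omega] at h4
  obtain ⟨t, ht⟩ := hdvd
  have hpos : 0 < (m - 1)! * (k - d)! :=
    Nat.mul_pos (Nat.factorial_pos _) (Nat.factorial_pos _)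
  rw [ht, Nat.mul_div_cancel_left t hpos,
    show d * ((m - 1)! * (k - d)! * t) * (k - 1)! =
      (m - 1)! * (k - d)! * (d * t * (k - 1)!) by ring,
    Nat.mul_div_cancel_left _ hpos]
end

section
/- For each n ≥ 1, Σ_{k=1}^{n} S(n,k) · n!/(n-k+1)! = (n+1)^{n-1}, where S(n,k) is the Stirling number of the second kind. (The Shi arrangement Shi(n) has (n+1)^{n-1} regions, counted by ceiling partitions.) -/
open Finset Nat

/-- The Stirling number of the second kind: the number of set partitions of an
n-element set into k nonempty blocks. -/
noncomputable def stirling (n k : ℕ) : ℕ :=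
  Nat.card {P : Finpartition (univ : Finset (Fin n)) // P.parts.card = k}

/-!
A map `f : α → β` is the same as the partition of `α` into the nonempty fibres of `f`
together with an injective labelling of its blocks by `β`. Counting maps `Fin n → Fin m`
this way gives `m ^ n = ∑ₖ S(n,k) · m(m-1)⋯(m-k+1)`. For `m = n + 1` and `1 ≤ k ≤ n` the
falling factorial is `(n+1) · n!/(n-k+1)!`, and `S(n,0) = 0`, so dividing by `n + 1` gives
the identity.
-/

namespace Finpartition

variable {α β : Type*} [DecidableEq α] [Fintype α]

def partOf (P : Finpartition (univ : Finset α)) (x : α) : P.parts :=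
  ⟨P.part x, P.part_mem.2 (mem_univ x)⟩

lemma ext_of_part {P Q : Finpartition (univ : Finset α)} (h : ∀ x, P.part x = Q.part x) :
    P = Q := by
  ext p
  constructor
  · intro hp
    obtain ⟨x, hx⟩ := P.nonempty_of_mem_parts hp
    rw [← P.part_eq_of_mem hp hx, h]
    exact Q.part_mem.2 (mem_univ x)
  · intro hp
    obtain ⟨x, hx⟩ := Q.nonempty_of_mem_parts hp
    rw [← Q.part_eq_of_mem hp hx, ← h]
    exact P.part_mem.2 (mem_univ x)

lemma mem_part_iff_partOf_eq {P : Finpartition (univ : Finset α)} {x y : α} :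
    y ∈ P.part x ↔ P.partOf x = P.partOf y := by
  rw [P.mem_part_iff_part_eq_part (mem_univ y) (mem_univ x), partOf, partOf, Subtype.mk.injEq,
    eq_comm]

lemma mem_part_iff_apply_eq {P : Finpartition (univ : Finset α)} (g : P.parts ↪ β) {x y : α} :
    y ∈ P.part x ↔ g (P.partOf x) = g (P.partOf y) := by
  rw [mem_part_iff_partOf_eq, g.injective.eq_iff]

lemma bijective_sigma_embedding_comp_partOf :
    Function.Bijective fun z : Σ P : Finpartition (univ : Finset α), P.parts ↪ β ↦
      z.2 ∘ z.1.partOf := by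
  constructor
  · rintro ⟨P, g⟩ ⟨Q, h⟩ hgh
    have hPQ : ∀ x y, y ∈ P.part x ↔ y ∈ Q.part x := fun x y ↦ by
      rw [mem_part_iff_apply_eq g, mem_part_iff_apply_eq h]
      exact Iff.of_eq (congrArg₂ (· = ·) (congrFun hgh x) (congrFun hgh y))
    obtain rfl : P = Q := ext_of_part fun x ↦ Finset.ext (hPQ x)
    congr 1
    ext ⟨p, hp⟩
    obtain ⟨x, hx⟩ := P.nonempty_of_mem_parts hp
    have hxp : P.partOf x = ⟨p, hp⟩ := Subtype.ext (P.part_eq_of_mem hp hx)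
    rw [← hxp]
    exact congrFun hgh x
  · intro f
    classical
    let P := ofSetoid (Setoid.ker f)
    have hf : ∀ {x y}, y ∈ P.part x ↔ f x = f y := mem_part_ofSetoid_iff_rel
    let label : P.parts → β := fun p ↦ f (P.nonempty_of_mem_parts p.2).choose
    have label_partOf : ∀ x, label (P.partOf x) = f x := fun x ↦
      (hf.1 (P.nonempty_of_mem_parts (P.partOf x).2).choose_spec).symm
    have label_injective : Function.Injective label := by
      rintro ⟨p, hp⟩ ⟨q, hq⟩ hpq
      obtain ⟨x, hx⟩ := P.nonempty_of_mem_parts hp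
      obtain ⟨y, hy⟩ := P.nonempty_of_mem_parts hq
      have hxp : P.partOf x = ⟨p, hp⟩ := Subtype.ext (P.part_eq_of_mem hp hx)
      have hyq : P.partOf y = ⟨q, hq⟩ := Subtype.ext (P.part_eq_of_mem hq hy)
      rw [← hxp, ← hyq, label_partOf, label_partOf, ← hf, mem_part_iff_partOf_eq] at hpq
      rw [← hxp, ← hyq, hpq]
    exact ⟨⟨P, ⟨label, label_injective⟩⟩, funext label_partOf⟩

theorem card_pi_eq_sum_descFactorial [Fintype β] :
    Fintype.card β ^ Fintype.card α =
      ∑ P : Finpartition (univ : Finset α), (Fintype.card β).descFactorial #P.parts := by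
  classical
  rw [← Fintype.card_fun, ← Fintype.card_of_bijective bijective_sigma_embedding_comp_partOf,
    Fintype.card_sigma]
  simp only [Fintype.card_embedding_eq, Fintype.card_coe]

end Finpartition

theorem pow_eq_sum_stirling_mul_descFactorial (n m : ℕ) :
    m ^ n = ∑ k ∈ range (n + 1), stirling n k * m.descFactorial k := by
  classical
  have hcard := Finpartition.card_pi_eq_sum_descFactorial (α := Fin n) (β := Fin m)
  rw [Fintype.card_fin, Fintype.card_fin] at hcard
  rw [hcard, ← sum_fiberwise_of_maps_to (g := fun P ↦ #P.parts) (t := range (n + 1))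
    fun P _ ↦ mem_range_succ_iff.2 (by simpa using P.card_parts_le_card)]
  refine sum_congr rfl fun k _ ↦ ?_
  rw [sum_congr rfl fun P hP ↦ by rw [(mem_filter.1 hP).2], sum_const, smul_eq_mul, stirling,
    Nat.card_eq_fintype_card, Fintype.card_subtype]

lemma stirling_zero_right {n : ℕ} (hn : n ≠ 0) : stirling n 0 = 0 := by
  rw [stirling, Nat.card_eq_zero]
  left
  refine ⟨fun ⟨P, hP⟩ ↦ ?_⟩
  rw [Finset.card_eq_zero, Finpartition.parts_eq_empty_iff, bot_eq_empty, univ_eq_empty_iff] at hP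
  exact hP.false ⟨0, Nat.pos_of_ne_zero hn⟩

lemma succ_descFactorial_eq_mul_factorial_div {n k : ℕ} (hk₀ : 1 ≤ k) (hk : k ≤ n) :
    (n + 1).descFactorial k = (n + 1) * (n ! / (n - k + 1)!) := by
  obtain ⟨j, rfl⟩ : ∃ j, k = j + 1 := ⟨k - 1, by omega⟩
  rw [succ_descFactorial_succ, descFactorial_eq_div (show j ≤ n by omega), show n - j = n - (j + 1) + 1 by omega]

/-- Σ_{k=1}^n S(n,k)·n!/(n-k+1)! = (n+1)^{n-1}
(the Shi arrangement Shi(n) has (n+1)^{n-1} regions, counted by ceiling partitions). -/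
theorem stmt14 (n : ℕ) (hn : 1 ≤ n) :
    ∑ k ∈ Icc 1 n, stirling n k * (n ! / (n - k + 1)!) = (n + 1) ^ (n - 1) := by
  have hrange : range (n + 1) = insert 0 (Icc 1 n) := by
    ext k
    simp only [mem_range, mem_insert, mem_Icc]
    omega
  apply Nat.eq_of_mul_eq_mul_left n.succ_pos
  calc (n + 1) * ∑ k ∈ Icc 1 n, stirling n k * (n ! / (n - k + 1)!)
      = ∑ k ∈ Icc 1 n, stirling n k * (n + 1).descFactorial k := by
        rw [mul_sum]
        refine sum_congr rfl fun k hk ↦ ?_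
        rw [mem_Icc] at hk
        rw [succ_descFactorial_eq_mul_factorial_div hk.1 hk.2, mul_left_comm]
    _ = ∑ k ∈ range (n + 1), stirling n k * (n + 1).descFactorial k := by
        rw [hrange, sum_insert (by simp), stirling_zero_right (by omega), zero_mul, zero_add]
    _ = (n + 1) ^ n := (pow_eq_sum_stirling_mul_descFactorial n (n + 1)).symm
    _ = (n + 1) * (n + 1) ^ (n - 1) := by rw [← pow_succ', Nat.succ_eq_add_one, Nat.sub_add_cancel hn]
end

section
/- Fix n ≥ 2 and a partition (a,b) of {1,...,n} with k blocks (so n-k arcs, n-k ≥ 1). Summing the expression d·(n-d-1)!·(k-1)!/((n-k-1)!·(k-d)!) over d = 1, ..., k yields n!/(n-k+1)!. -/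
/-!
Dividing out the factorials, the `d`-th summand is `d * (n-d-1).choose (k-d) * (k-1)!` and the
right-hand side is `n.choose (k-1) * (k-1)!`. Since `d = (1 + (d-1)).choose (d-1)`, the remaining
identity `∑ d * (n-d-1).choose (k-d) = n.choose (k-1)` is the upper Vandermonde identity
`∑_{i+j=c} (a+i).choose i * (b+j).choose j = (a+b+1+c).choose c` with `a = 1`, `b = n-k-1`,
`c = k-1`; it follows from the Chu–Vandermonde identity in `ℤ` at negative upper arguments.
-/

open Finset Nat

theorem Int.choose_neg_natCast_succ (a i : ℕ) :
    Ring.choose (-((a + 1 : ℕ) : ℤ)) i = (i : ℤ).negOnePow • ((a + i).choose i : ℤ) := by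
  rw [Ring.choose_neg, ← Ring.choose_natCast]
  push_cast
  ring_nf

theorem Nat.sum_antidiagonal_add_choose_mul_add_choose (a b c : ℕ) :
    ∑ ij ∈ antidiagonal c, (a + ij.1).choose ij.1 * (b + ij.2).choose ij.2 =
      (a + b + 1 + c).choose c := by
  have key := Ring.add_choose_eq (r := -((a + 1 : ℕ) : ℤ)) (s := -((b + 1 : ℕ) : ℤ)) c
    (Commute.all _ _)
  rw [← neg_add, ← Nat.cast_add, show a + 1 + (b + 1) = (a + b + 1) + 1 by ring] at key
  have hterm : ∀ ij ∈ antidiagonal c,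
      Ring.choose (-((a + 1 : ℕ) : ℤ)) ij.1 * Ring.choose (-((b + 1 : ℕ) : ℤ)) ij.2 =
        (c : ℤ).negOnePow • (((a + ij.1).choose ij.1 * (b + ij.2).choose ij.2 : ℕ) : ℤ) := by
    rintro ⟨i, j⟩ hij
    rw [HasAntidiagonal.mem_antidiagonal] at hij
    rw [Int.choose_neg_natCast_succ, Int.choose_neg_natCast_succ, ← hij]
    simp only [Units.smul_def, Nat.cast_add, Int.negOnePow_add, Units.val_mul, Nat.cast_mul]
    ring
  rw [sum_congr rfl hterm, ← smul_sum, Int.choose_neg_natCast_succ, smul_left_cancel_iff] at key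
  exact_mod_cast key.symm

theorem Finset.sum_Icc_one_eq_sum_antidiagonal {M : Type*} [AddCommMonoid M] (f : ℕ → M)
    (c : ℕ) : ∑ d ∈ Icc 1 (c + 1), f d = ∑ ij ∈ antidiagonal c, f (ij.1 + 1) := by
  rw [Nat.sum_antidiagonal_eq_sum_range_succ (fun i _ ↦ f (i + 1)), range_eq_Ico,
    sum_Ico_add' f, zero_add, Ico_add_one_right_eq_Icc]

theorem Nat.mul_factorial_add_mul_div (x y a b : ℕ) :
    x * (a + b)! * y / (a ! * b !) = x * (a + b).choose b * y := by
  rw [← add_choose_mul_factorial_mul_factorial, Nat.div_eq_of_eq_mul_left (by positivity)]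
  ring

theorem Nat.factorial_div_factorial_sub {n j : ℕ} (h : j ≤ n) :
    n ! / (n - j)! = n.choose j * j ! := by
  rw [← descFactorial_eq_div h, descFactorial_eq_factorial_mul_choose, mul_comm]

theorem stmt15_general (n k : ℕ) (hk1 : 1 ≤ k) (hk : k ≤ n - 1) :
    ∑ d ∈ Icc 1 k, d * (n - d - 1)! * (k - 1)! / ((n - k - 1)! * (k - d)!) =
      n ! / (n - k + 1)! := by
  obtain ⟨c, rfl⟩ : ∃ c, k = c + 1 := ⟨k - 1, by omega⟩
  obtain ⟨m, rfl⟩ : ∃ m, n = m + c + 2 := ⟨n - c - 2, by omega⟩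
  calc ∑ d ∈ Icc 1 (c + 1), d * (m + c + 2 - d - 1)! * (c + 1 - 1)! /
        ((m + c + 2 - (c + 1) - 1)! * (c + 1 - d)!)
      = ∑ ij ∈ antidiagonal c, (1 + ij.1).choose ij.1 * (m + ij.2).choose ij.2 * c ! := by
        rw [sum_Icc_one_eq_sum_antidiagonal]
        refine sum_congr rfl fun ij hij ↦ ?_
        rw [HasAntidiagonal.mem_antidiagonal] at hij
        rw [show m + c + 2 - (ij.1 + 1) - 1 = m + ij.2 by omega, show c + 1 - 1 = c by omega,
          show m + c + 2 - (c + 1) - 1 = m by omega, show c + 1 - (ij.1 + 1) = ij.2 by omega,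
          mul_factorial_add_mul_div, add_comm 1, choose_succ_self_right]
    _ = (m + c + 2).choose c * c ! := by
        rw [← sum_mul, sum_antidiagonal_add_choose_mul_add_choose,
          show 1 + m + 1 + c = m + c + 2 by omega]
    _ = (m + c + 2)! / (m + c + 2 - (c + 1) + 1)! := by
        rw [show m + c + 2 - (c + 1) + 1 = m + c + 2 - c by omega,
          factorial_div_factorial_sub (by omega)]

/-- for 1 ≤ k ≤ n-1 (the number of blocks of a ceiling partition with at
least one arc), Σ_{d=1}^k d (n-d-1)! (k-1)! / ((n-k-1)! (k-d)!) = n!/(n-k+1)!. -/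
theorem stmt15 (n k : ℕ) (hn : 2 ≤ n) (hk1 : 1 ≤ k) (hk : k ≤ n - 1) :
    ∑ d ∈ Icc 1 k, d * (n - d - 1)! * (k - 1)! / ((n - k - 1)! * (k - d)!) =
      n ! / (n - k + 1)! :=
  stmt15_general n k hk1 hk
end
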